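/- Let Y be a closed subspace of a real Banach space X and let y₀ ∈ S_Y. If y₀ is not a weakly almost locally uniformly rotund (w-aLUR) point of S_Y, then y₀ is not a w-aLUR point of S_X. -/

import Mathlib

open Filter Topology NormedSpace

/-- `x` is a weakly almost locally uniformly rotund (w-aLUR) point of the unit sphere:
under the aLUR double-limit condition the sequence `{x_n}` converges weakly to `x`. -/
def WALURPoint {Z : Type*} [NormedAddCommGroup Z] [NormedSpace ℝ Z] (x : Z) : Prop :=
  ∀ (xs : ℕ → Z) (fs : ℕ → StrongDual ℝ Z) (α : ℕ → ℝ),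
    (∀ n, ‖xs n‖ = 1) → (∀ m, ‖fs m‖ = 1) →
    (∀ m, Tendsto (fun n => fs m ((2 : ℝ)⁻¹ • (xs n + x))) atTop (𝓝 (α m))) →
    Tendsto α atTop (𝓝 1) →
    ∀ g : StrongDual ℝ Z, Tendsto (fun n => g (xs n)) atTop (𝓝 (g x))

/-- Norm-preserving Hahn–Banach extensions of the functionals `fs m` turn the aLUR data of
`(ys, fs)` in `Y` into aLUR data of `(ys, Fs)` in `X`, and weak convergence in `X` restricts
to weak convergence in `Y` by extending each test functional in the same way. -/
theorem WALURPoint.of_coe {X : Type*} [NormedAddCommGroup X] [NormedSpace ℝ X]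
    {Y : Subspace ℝ X} {y : Y} (hX : WALURPoint (y : X)) : WALURPoint y := by
  intro ys fs α hys hfs hα hα1 g
  choose Fs hFs hFs_norm using fun m => exists_extension_norm_eq Y (fs m)
  obtain ⟨G, hG, -⟩ := exists_extension_norm_eq Y g
  have hFs_mid : ∀ m n, Fs m ((2 : ℝ)⁻¹ • ((ys n : X) + y)) = fs m ((2 : ℝ)⁻¹ • (ys n + y)) :=
    fun m n => hFs m ((2 : ℝ)⁻¹ • (ys n + y))
  have hX_weak := hX (fun n => ys n) Fs α (fun n => by simpa using hys n)
    (fun m => (hFs_norm m).trans (hfs m)) (fun m => by simpa only [hFs_mid] using hα m) hα1 G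
  simpa only [hG] using hX_weak

theorem not_wALUR_of_subspace_general {X : Type*} [NormedAddCommGroup X] [NormedSpace ℝ X]
    (Y : Subspace ℝ X)
    (y₀ : Y) (h : ¬ WALURPoint y₀) :
    ¬ WALURPoint (y₀ : X) :=
  fun hX => h hX.of_coe

/-- If `y₀ ∈ S_Y` is not a w-aLUR point of the unit sphere of a closed subspace `Y` of `X`,
then `y₀` is not a w-aLUR point of the unit sphere of `X`. -/
theorem not_wALUR_of_subspace {X : Type*} [NormedAddCommGroup X] [NormedSpace ℝ X]
    [CompleteSpace X] (Y : Subspace ℝ X) (hY : IsClosed (Y : Set X))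
    (y₀ : Y) (hy₀ : ‖y₀‖ = 1) (h : ¬ WALURPoint y₀) :
    ¬ WALURPoint (y₀ : X) :=
  not_wALUR_of_subspace_general Y y₀ h
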